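/- Let δ > 0 and τ ∈ ℝ with τ < 2√δ, and let λ be a root of λ² - τλ + δ = 0. If τ² - 4δ < 0 (complex conjugate roots), then |λ| = √δ and cos(arg λ) = τ/(2√δ); consequently the Matignon condition |arg λ| > βπ/2 is equivalent to τ < 2√δ·cos(βπ/2) for β ∈ (0,1]. -/

import Mathlib

/-! Writing `λ = a + b i`, the imaginary part of the equation is `b (2a - τ) = 0`, and `b ≠ 0`
because `τ² < 4δ` leaves no real root; hence `a = τ / 2`, and the real part then gives
`a² + b² = δ`. Since cosine is strictly decreasing on `[0, π]` and `cos |arg λ| = a / |λ|`,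
the Matignon condition `|arg λ| > βπ/2` is the inequality `τ / 2 < √δ cos (βπ/2)`. -/

namespace Complex

section QuadraticRoot

variable {τ δ : ℝ} {z : ℂ}

lemma re_im_of_sq_sub_mul_add_eq_zero (h : z ^ 2 - τ * z + δ = 0) :
    z.re ^ 2 - z.im ^ 2 - τ * z.re + δ = 0 ∧ z.im * (2 * z.re - τ) = 0 := by
  constructor
  · simpa [sq] using congrArg re h
  · have him : z.re * z.im + z.im * z.re - τ * z.im = 0 := by simpa [sq] using congrArg im h
    linear_combination him

lemma im_ne_zero_of_sq_sub_mul_add_eq_zero (hdisc : τ ^ 2 - 4 * δ < 0)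
    (h : z ^ 2 - τ * z + δ = 0) : z.im ≠ 0 := by
  intro him
  have hre := (re_im_of_sq_sub_mul_add_eq_zero h).1
  rw [him] at hre
  nlinarith [sq_nonneg (2 * z.re - τ)]

lemma re_eq_half_of_sq_sub_mul_add_eq_zero (hdisc : τ ^ 2 - 4 * δ < 0)
    (h : z ^ 2 - τ * z + δ = 0) : z.re = τ / 2 := by
  have him := (re_im_of_sq_sub_mul_add_eq_zero h).2
  rcases mul_eq_zero.mp him with him | hre
  · exact absurd him (im_ne_zero_of_sq_sub_mul_add_eq_zero hdisc h)
  · linarith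

lemma norm_eq_sqrt_of_sq_sub_mul_add_eq_zero (hdisc : τ ^ 2 - 4 * δ < 0)
    (h : z ^ 2 - τ * z + δ = 0) : ‖z‖ = √δ := by
  have hre := re_eq_half_of_sq_sub_mul_add_eq_zero hdisc h
  have hnormSq : normSq z = δ := by
    rw [normSq_apply]
    linear_combination 2 * z.re * hre - (re_im_of_sq_sub_mul_add_eq_zero h).1
  rw [norm_def, hnormSq]

lemma cos_arg_eq_of_sq_sub_mul_add_eq_zero (hdisc : τ ^ 2 - 4 * δ < 0)
    (h : z ^ 2 - τ * z + δ = 0) : Real.cos (arg z) = τ / (2 * √δ) := by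
  have hz : z ≠ 0 := fun hz ↦ im_ne_zero_of_sq_sub_mul_add_eq_zero hdisc h (by simp [hz])
  rw [cos_arg hz, norm_eq_sqrt_of_sq_sub_mul_add_eq_zero hdisc h,
    re_eq_half_of_sq_sub_mul_add_eq_zero hdisc h, div_div, mul_comm]

end QuadraticRoot

lemma lt_abs_arg_iff_re_lt {z : ℂ} (hz : z ≠ 0) {θ : ℝ} (hθ : θ ∈ Set.Icc 0 Real.pi) :
    θ < |arg z| ↔ z.re < ‖z‖ * Real.cos θ := by
  have harg : |arg z| ∈ Set.Icc 0 Real.pi := ⟨abs_nonneg _, abs_arg_le_pi z⟩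
  rw [← Real.strictAntiOn_cos.lt_iff_gt harg hθ, Real.cos_abs, cos_arg hz,
    div_lt_iff₀' (norm_pos_iff.mpr hz)]

end Complex

theorem stmt18_general (δ τ : ℝ) (lam : ℂ)
    (hroot : lam ^ 2 - (τ : ℂ) * lam + (δ : ℂ) = 0)
    (hdisc : τ ^ 2 - 4 * δ < 0) :
    ‖lam‖ = Real.sqrt δ ∧
    Real.cos (Complex.arg lam) = τ / (2 * Real.sqrt δ) ∧
    ∀ β : ℝ, 0 < β → β ≤ 1 →
      (|Complex.arg lam| > β * Real.pi / 2 ↔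
        τ < 2 * Real.sqrt δ * Real.cos (β * Real.pi / 2)) := by
  have hnorm := Complex.norm_eq_sqrt_of_sq_sub_mul_add_eq_zero hdisc hroot
  refine ⟨hnorm, Complex.cos_arg_eq_of_sq_sub_mul_add_eq_zero hdisc hroot,
    fun β hβ0 hβ1 ↦ ?_⟩
  have hlam : lam ≠ 0 := fun h ↦
    Complex.im_ne_zero_of_sq_sub_mul_add_eq_zero hdisc hroot (by simp [h])
  have hθ : β * Real.pi / 2 ∈ Set.Icc 0 Real.pi := by
    constructor <;> nlinarith [Real.pi_pos]
  rw [gt_iff_lt, Complex.lt_abs_arg_iff_re_lt hlam hθ, hnorm,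
    Complex.re_eq_half_of_sq_sub_mul_add_eq_zero hdisc hroot]
  constructor <;> intro h <;> linarith

theorem stmt18 (δ τ : ℝ) (hδ : 0 < δ) (hτ : τ < 2 * Real.sqrt δ) (lam : ℂ)
    (hroot : lam ^ 2 - (τ : ℂ) * lam + (δ : ℂ) = 0)
    (hdisc : τ ^ 2 - 4 * δ < 0) :
    ‖lam‖ = Real.sqrt δ ∧
    Real.cos (Complex.arg lam) = τ / (2 * Real.sqrt δ) ∧
    ∀ β : ℝ, 0 < β → β ≤ 1 →
      (|Complex.arg lam| > β * Real.pi / 2 ↔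
        τ < 2 * Real.sqrt δ * Real.cos (β * Real.pi / 2)) :=
  stmt18_general δ τ lam hroot hdisc
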